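/- The exchange graph of Farey triples is a tree: it is connected and contains no cycles (each triple is connected to exactly 3 distinct triples, and there is a unique mutation path between any two triples). -/

import Mathlib

def delta (p q : ℤ × ℤ) : ℤ := |p.1 * q.2 - p.2 * q.1|

def lowest (p : ℤ × ℤ) : Prop :=
  Int.gcd p.1 p.2 = 1 ∧ 0 ≤ p.2 ∧ (p.2 = 0 → 0 < p.1)

/-- A Farey triple, as an (unordered) set of three pairwise Farey neighbors. -/
def IsFareyTriple (S : Finset (ℤ × ℤ)) : Prop :=
  S.card = 3 ∧ (∀ p ∈ S, lowest p) ∧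
    ∀ p ∈ S, ∀ q ∈ S, p ≠ q → delta p q = 1

/-- The exchange graph of Farey triples: two triples are adjacent iff they are
related by a single mutation, i.e. iff they share exactly two elements. -/
def exchangeGraph : SimpleGraph {S : Finset (ℤ × ℤ) // IsFareyTriple S} :=
  SimpleGraph.fromRel (fun S S' => (S.1 ∩ S'.1).card = 2)

/-!
Cramer's rule shows that a Farey pair `{a, b}` lies in exactly two Farey triples,
`{a, b, a + b}` and `{a, b, ±(a - b)}`; so a triple has one neighbour per pair, three in all.
Weigh a triple by the sum of the heights `|2p - q| + 3q` of its members `p / q`. A triple not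
containing `∞` has the form `{a, b, a + b}`, and replacing `a + b` by `±(a - b)` lowers its
weight while the other two mutations raise it. The triples through `∞` form the spine
`{n, n + 1, ∞}`, whose weight grows with `|n|` away from `{0, 1, ∞}`. Hence every triple has at
most one neighbour that is not heavier, and every triple other than `{0, 1, ∞}` has a lighter
one: descending the weight connects the graph, and a heaviest vertex on a cycle would have two
such neighbours.
-/

namespace SimpleGraph

variable {V α : Type*} [LinearOrder α] {G : SimpleGraph V}

theorem isAcyclic_of_subsingleton_adj_le (f : V → α)
    (h : ∀ v, {w | G.Adj v w ∧ f w ≤ f v}.Subsingleton) : G.IsAcyclic := by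
  classical
  intro v c hc
  obtain ⟨u, hu, hmax⟩ := c.support.toFinset.exists_max_image f ⟨v, by simp⟩
  rw [List.mem_toFinset] at hu
  have hc' := hc.rotate hu
  have hle : ∀ w ∈ (c.rotate u hu).support, f w ≤ f u := fun w hw =>
    hmax w (by simpa [Walk.mem_support_rotate_iff] using hw)
  exact hc'.snd_ne_penultimate <| h u
    ⟨Walk.adj_snd hc'.not_nil, hle _ (Walk.getVert_mem_support _ _)⟩
    ⟨(Walk.adj_penultimate hc'.not_nil).symm, hle _ (Walk.getVert_mem_support _ _)⟩

theorem reachable_of_exists_adj_lt [WellFoundedLT α] (f : V → α) (r : V)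
    (h : ∀ v, v ≠ r → ∃ w, G.Adj v w ∧ f w < f v) (v : V) : G.Reachable v r := by
  induction v using (InvImage.wf f wellFounded_lt).induction with
  | _ v ih =>
    by_cases hv : v = r
    · exact hv ▸ Reachable.refl _
    obtain ⟨w, hvw, hlt⟩ := h v hv
    exact hvw.reachable.trans (ih w hlt)

theorem connected_of_exists_adj_lt [WellFoundedLT α] (f : V → α) (r : V)
    (h : ∀ v, v ≠ r → ∃ w, G.Adj v w ∧ f w < f v) : G.Connected :=
  (connected_iff_exists_forall_reachable G).2
    ⟨r, fun v => (reachable_of_exists_adj_lt f r h v).symm⟩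

end SimpleGraph

namespace Finset

variable {α : Type*} [DecidableEq α]

theorem triple_rotate (a b c : α) : ({a, b, c} : Finset α) = {b, c, a} := by
  rw [insert_comm, pair_comm]

theorem triple_swap (a b c : α) : ({a, b, c} : Finset α) = {a, c, b} := by
  rw [pair_comm]

theorem exists_eq_triple_of_mem {T : Finset α} {a b : α}
    (hT : T.card = 3) (ha : a ∈ T) (hb : b ∈ T) (hab : a ≠ b) : ∃ x, T = {a, b, x} := by
  have hb' : b ∈ T.erase a := mem_erase.2 ⟨hab.symm, hb⟩
  have hcard : ((T.erase a).erase b).card = 1 := by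
    rw [card_erase_of_mem hb', card_erase_of_mem ha, hT]
  obtain ⟨x, hx⟩ := card_eq_one.1 hcard
  exact ⟨x, by rw [← hx, insert_erase hb', insert_erase ha]⟩

end Finset

namespace Farey

variable {a b c x : ℤ × ℤ}

theorem delta_comm (a b : ℤ × ℤ) : delta a b = delta b a := by
  rw [delta, delta, ← abs_neg]; ring_nf

theorem delta_eq_one_iff :
    delta a b = 1 ↔ a.1 * b.2 - a.2 * b.1 = 1 ∨ a.1 * b.2 - a.2 * b.1 = -1 :=
  abs_eq zero_le_one

theorem ne_of_delta_eq_one (h : delta a b = 1) : a ≠ b := by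
  rintro rfl
  simp [delta, mul_comm] at h

theorem delta_add_left (a b : ℤ × ℤ) : delta (a + b) a = delta a b := by
  rw [delta, delta, ← abs_neg]; congr 1; simp only [Prod.fst_add, Prod.snd_add]; ring

theorem delta_add_right (a b : ℤ × ℤ) : delta (a + b) b = delta a b := by
  rw [delta, delta]; congr 1; simp only [Prod.fst_add, Prod.snd_add]; ring

theorem delta_sub_left (a b : ℤ × ℤ) : delta (a - b) a = delta a b := by
  rw [delta, delta]; congr 1; simp only [Prod.fst_sub, Prod.snd_sub]; ring

theorem delta_sub_right (a b : ℤ × ℤ) : delta (a - b) b = delta a b := by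
  rw [delta, delta]; congr 1; simp only [Prod.fst_sub, Prod.snd_sub]; ring

theorem delta_neg_left (a b : ℤ × ℤ) : delta (-a) b = delta a b := by
  rw [delta, delta, ← abs_neg]; congr 1; simp only [Prod.fst_neg, Prod.snd_neg]; ring

theorem lowest_of_delta_eq_one {p q : ℤ × ℤ} (h : delta p q = 1) (h₂ : 0 ≤ p.2)
    (h₀ : p.2 = 0 → 0 < p.1) : lowest p := by
  refine ⟨Int.isCoprime_iff_gcd_eq_one.1 ?_, h₂, h₀⟩
  rcases delta_eq_one_iff.1 h with h | h
  · exact ⟨q.2, -q.1, by linear_combination h⟩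
  · exact ⟨-q.2, q.1, by linear_combination -h⟩

theorem lowest_infty : lowest (1, 0) := by
  simp [lowest]

theorem lowest_int (n : ℤ) : lowest (n, 1) := by
  simp [lowest]

theorem eq_infty_of_lowest {p : ℤ × ℤ} (hp : lowest p) (h : p.2 = 0) : p = (1, 0) := by
  obtain ⟨hgcd, -, hpos⟩ := hp
  rw [h, Int.gcd_zero_right] at hgcd
  exact Prod.ext (by simp only; omega) h

theorem one_le_snd_of_lowest {p : ℤ × ℤ} (hp : lowest p) (h : p ≠ (1, 0)) : 1 ≤ p.2 := by
  have := hp.2.1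
  by_contra! h'
  exact h (eq_infty_of_lowest hp (by omega))

theorem not_lowest_neg {p : ℤ × ℤ} (hp : lowest p) : ¬ lowest (-p) := by
  intro hn
  have h : p.2 = 0 := by have := hp.2.1; have := hn.2.1; simp only [Prod.snd_neg] at *; omega
  have := hp.2.2 h
  have := hn.2.2 (by simp [h])
  simp only [Prod.fst_neg] at this
  omega

theorem not_lowest_zero : ¬ lowest 0 := by
  simp [lowest]

theorem ne_add_add_of_lowest {y : ℤ × ℤ} (hy : lowest y) (x : ℤ × ℤ) :
    x ≠ y + (x + y) := by
  intro h
  simp only [Prod.ext_iff, Prod.fst_add, Prod.snd_add] at h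
  exact not_lowest_zero (show y = 0 by ext <;> simp <;> omega ▸ hy)

/-- The Farey difference `±(a - b)`, with the sign that makes it `lowest`. -/
def fd (a b : ℤ × ℤ) : ℤ × ℤ :=
  if b.2 < a.2 ∨ (a.2 = b.2 ∧ b.1 < a.1) then a - b else b - a

theorem fd_eq_sub_or_eq_sub (a b : ℤ × ℤ) : fd a b = a - b ∨ fd a b = b - a := by
  unfold fd; split_ifs <;> simp

theorem delta_fd_left (a b : ℤ × ℤ) : delta (fd a b) a = delta a b := by
  rcases fd_eq_sub_or_eq_sub a b with h | h <;> rw [h]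
  · exact delta_sub_left a b
  · rw [← neg_sub, delta_neg_left, delta_sub_left]

theorem delta_fd_right (a b : ℤ × ℤ) : delta (fd a b) b = delta a b := by
  rcases fd_eq_sub_or_eq_sub a b with h | h <;> rw [h]
  · exact delta_sub_right a b
  · rw [← neg_sub, delta_neg_left, delta_sub_right]

structure IsFareyPair (a b : ℤ × ℤ) : Prop where
  lowest_left : lowest a
  lowest_right : lowest b
  delta_eq_one : delta a b = 1

theorem IsFareyPair.symm (h : IsFareyPair a b) : IsFareyPair b a :=
  ⟨h.lowest_right, h.lowest_left, (delta_comm b a).trans h.delta_eq_one⟩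

theorem IsFareyPair.ne (h : IsFareyPair a b) : a ≠ b :=
  ne_of_delta_eq_one h.delta_eq_one

theorem IsFareyPair.lowest_add (h : IsFareyPair a b) : lowest (a + b) := by
  obtain ⟨ha, hb, hd⟩ := h
  have ha₂ := ha.2.1
  have hb₂ := hb.2.1
  refine lowest_of_delta_eq_one ((delta_add_left a b).trans hd)
    (by simp only [Prod.snd_add]; omega) fun h₀ => ?_
  simp only [Prod.snd_add] at h₀
  exact absurd ((eq_infty_of_lowest ha (by omega)).trans (eq_infty_of_lowest hb (by omega)).symm)
    (ne_of_delta_eq_one hd)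

theorem IsFareyPair.lowest_fd (h : IsFareyPair a b) : lowest (fd a b) := by
  obtain ⟨ha, hb, hd⟩ := h
  refine lowest_of_delta_eq_one ((delta_fd_left a b).trans hd) ?_ fun h₀ => ?_ <;>
    unfold fd at * <;> split_ifs at * with hc <;> simp only [Prod.fst_sub, Prod.snd_sub] at *
  · omega
  · omega
  · omega
  · have : a.1 ≠ b.1 := fun h₁ => ne_of_delta_eq_one hd (Prod.ext h₁ (by omega))
    omega

theorem IsFareyPair.eq_fd (h : IsFareyPair a b) (hx : lowest x) (hx' : x = a - b ∨ x = b - a) :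
    x = fd a b := by
  have hfd := h.lowest_fd
  rcases hx' with rfl | rfl <;> rcases fd_eq_sub_or_eq_sub a b with h' | h' <;> rw [h'] at hfd ⊢
  · rw [← neg_sub] at hfd; exact absurd hfd (not_lowest_neg hx)
  · rw [← neg_sub] at hfd; exact absurd hfd (not_lowest_neg hx)

theorem eq_add_or_sub_of_delta (hab : delta a b = 1) (hax : delta a x = 1) (hbx : delta b x = 1) :
    x = a + b ∨ x = a - b ∨ x = b - a ∨ x = -(a + b) := by
  -- Cramer's rule, with all three signed determinants equal to `±1`
  have h₁ : (a.1 * b.2 - a.2 * b.1) * x.1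
      = (a.1 * x.2 - a.2 * x.1) * b.1 - (b.1 * x.2 - b.2 * x.1) * a.1 := by ring
  have h₂ : (a.1 * b.2 - a.2 * b.1) * x.2
      = (a.1 * x.2 - a.2 * x.1) * b.2 - (b.1 * x.2 - b.2 * x.1) * a.2 := by ring
  simp only [Prod.ext_iff, Prod.fst_add, Prod.snd_add, Prod.fst_sub, Prod.snd_sub, Prod.fst_neg,
    Prod.snd_neg]
  rcases delta_eq_one_iff.1 hab with hab | hab <;> rcases delta_eq_one_iff.1 hax with hax | hax <;>
    rcases delta_eq_one_iff.1 hbx with hbx | hbx <;> rw [hab, hax, hbx] at h₁ h₂ <;> omega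

theorem IsFareyPair.isFareyPair_iff (h : IsFareyPair a b) :
    IsFareyPair a x ∧ IsFareyPair b x ↔ x = a + b ∨ x = fd a b := by
  constructor
  · rintro ⟨⟨-, hx, hax⟩, ⟨-, -, hbx⟩⟩
    rcases eq_add_or_sub_of_delta h.delta_eq_one hax hbx with h' | h' | h' | h'
    · exact .inl h'
    · exact .inr (h.eq_fd hx (.inl h'))
    · exact .inr (h.eq_fd hx (.inr h'))
    · exact absurd (h' ▸ hx) (not_lowest_neg h.lowest_add)
  · have hab := h.delta_eq_one
    rintro (rfl | rfl)
    · exact ⟨⟨h.lowest_left, h.lowest_add, by rw [delta_comm, delta_add_left, hab]⟩,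
        ⟨h.lowest_right, h.lowest_add, by rw [delta_comm, delta_add_right, hab]⟩⟩
    · exact ⟨⟨h.lowest_left, h.lowest_fd, by rw [delta_comm, delta_fd_left, hab]⟩,
        ⟨h.lowest_right, h.lowest_fd, by rw [delta_comm, delta_fd_right, hab]⟩⟩

theorem isFareyTriple_triple_iff :
    IsFareyTriple {a, b, c} ↔ IsFareyPair a b ∧ IsFareyPair a c ∧ IsFareyPair b c := by
  constructor
  · rintro ⟨hcard, hlow, hdelta⟩
    obtain ⟨hab, hac, hbc⟩ := Finset.card_triple_eq_three_iff.1 hcard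
    simp only [Finset.mem_insert, Finset.mem_singleton] at hlow hdelta
    exact ⟨⟨hlow a (by simp), hlow b (by simp), hdelta a (by simp) b (by simp) hab⟩,
      ⟨hlow a (by simp), hlow c (by simp), hdelta a (by simp) c (by simp) hac⟩,
      ⟨hlow b (by simp), hlow c (by simp), hdelta b (by simp) c (by simp) hbc⟩⟩
  · rintro ⟨hab, hac, hbc⟩
    refine ⟨Finset.card_triple_eq_three_iff.2 ⟨hab.ne, hac.ne, hbc.ne⟩, ?_, ?_⟩
    · simp only [Finset.mem_insert, Finset.mem_singleton]
      rintro p (rfl | rfl | rfl)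
      exacts [hab.lowest_left, hab.lowest_right, hac.lowest_right]
    · simp only [Finset.mem_insert, Finset.mem_singleton]
      rintro p (rfl | rfl | rfl) q (rfl | rfl | rfl) hpq <;> first
        | exact absurd rfl hpq
        | exact hab.delta_eq_one | exact hac.delta_eq_one | exact hbc.delta_eq_one
        | exact hab.symm.delta_eq_one | exact hac.symm.delta_eq_one | exact hbc.symm.delta_eq_one

theorem _root_.IsFareyTriple.exists_eq {S : Finset (ℤ × ℤ)} (hS : IsFareyTriple S) :
    ∃ a b c, S = {a, b, c} ∧ IsFareyPair a b ∧ IsFareyPair a c ∧ IsFareyPair b c := by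
  obtain ⟨a, b, c, -, -, -, rfl⟩ := Finset.card_eq_three.1 hS.1
  exact ⟨a, b, c, rfl, isFareyTriple_triple_iff.1 hS⟩

theorem IsFareyPair.add_ne_fd (h : IsFareyPair a b) : a + b ≠ fd a b := by
  intro he
  rcases fd_eq_sub_or_eq_sub a b with h' | h' <;> rw [h'] at he
  · rw [sub_eq_add_neg] at he
    exact not_lowest_neg h.lowest_right (add_left_cancel he ▸ h.lowest_right)
  · rw [sub_eq_neg_add] at he
    exact not_lowest_neg h.lowest_left (add_right_cancel he ▸ h.lowest_left)

/-- The completion of the Farey pair `{a, b}` other than `c`. -/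
def mutant (a b c : ℤ × ℤ) : ℤ × ℤ := if c = a + b then fd a b else a + b

def mutate (a b c : ℤ × ℤ) : Finset (ℤ × ℤ) := {a, b, mutant a b c}

theorem IsFareyPair.isFareyPair_mutant (h : IsFareyPair a b) :
    IsFareyPair a (mutant a b c) ∧ IsFareyPair b (mutant a b c) :=
  h.isFareyPair_iff.2 (by unfold mutant; split_ifs <;> simp)

theorem IsFareyPair.mutant_ne (h : IsFareyPair a b) : mutant a b c ≠ c := by
  unfold mutant
  split_ifs with hc
  · exact hc ▸ h.add_ne_fd.symm
  · exact Ne.symm hc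

theorem IsFareyPair.eq_mutant (h : IsFareyPair a b) (hc : IsFareyPair a c ∧ IsFareyPair b c)
    (hx : IsFareyPair a x ∧ IsFareyPair b x) (hxc : x ≠ c) : x = mutant a b c := by
  rw [h.isFareyPair_iff] at hc hx
  unfold mutant
  split_ifs with hcab
  · exact hx.resolve_left (fun hx => hxc (hx.trans hcab.symm))
  · exact hx.resolve_right (fun hx => hxc (hx.trans (hc.resolve_left hcab).symm))

theorem isFareyTriple_mutate (h : IsFareyPair a b) : IsFareyTriple (mutate a b c) :=
  isFareyTriple_triple_iff.2 ⟨h, h.isFareyPair_mutant⟩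

/-- Centred at `1 / 2`, so that the lightest triple is `{0, 1, ∞}`. -/
def height (p : ℤ × ℤ) : ℕ := (2 * p.1 - p.2).natAbs + 3 * p.2.natAbs

def weight (S : Finset (ℤ × ℤ)) : ℕ := ∑ p ∈ S, height p

theorem height_fd (a b : ℤ × ℤ) : height (fd a b) = height (a - b) := by
  rcases fd_eq_sub_or_eq_sub a b with h | h <;> rw [h]
  simp only [height, Prod.fst_sub, Prod.snd_sub]
  omega

theorem height_sub_lt_height_add (hd : delta a b = 1) (ha : 1 ≤ a.2) (hb : 1 ≤ b.2) :
    height (a - b) < height (a + b) := by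
  obtain ⟨a₁, a₂⟩ := a
  obtain ⟨b₁, b₂⟩ := b
  simp only [height, Prod.mk_sub_mk, Prod.mk_add_mk] at ha hb ⊢
  set X := 2 * a₁ - a₂ with hX
  set Y := 2 * b₁ - b₂ with hY
  have hdet : X * b₂ - Y * a₂ = 2 ∨ X * b₂ - Y * a₂ = -2 := by
    rcases delta_eq_one_iff.1 hd with h | h
    exacts [.inl (by linear_combination 2 * h), .inr (by linear_combination 2 * h)]
  -- opposite signs give `|X - Y| ≤ |X b₂ - Y a₂| = 2`, equal signs `|X - Y| ≤ |X + Y|`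
  have hmixed : (0 < X ∧ Y < 0) ∨ (X < 0 ∧ 0 < Y) → (X - Y).natAbs ≤ 2 := by
    rintro (⟨hX₀, hY₀⟩ | ⟨hX₀, hY₀⟩)
    · have : X - Y ≤ 2 := by rcases hdet with h | h <;> nlinarith
      omega
    · have : Y - X ≤ 2 := by rcases hdet with h | h <;> nlinarith
      omega
  omega

theorem weight_triple (hab : a ≠ b) (hac : a ≠ c) (hbc : b ≠ c) :
    weight {a, b, c} = height a + height b + height c := by
  rw [weight, Finset.sum_insert (by simp [hab, hac]), Finset.sum_insert (by simp [hbc]),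
    Finset.sum_singleton, add_assoc]

theorem weight_mutate_add_height (hS : IsFareyTriple {a, b, c}) :
    weight (mutate a b c) + height c = weight {a, b, c} + height (mutant a b c) := by
  obtain ⟨hab, hac, hbc⟩ := isFareyTriple_triple_iff.1 hS
  obtain ⟨ham, hbm⟩ := hab.isFareyPair_mutant (c := c)
  rw [mutate, weight_triple hab.ne ham.ne hbm.ne, weight_triple hab.ne hac.ne hbc.ne]
  ring

theorem weight_mutate_lt (h : IsFareyPair a b) (ha : 1 ≤ a.2) (hb : 1 ≤ b.2) :
    weight (mutate a b (a + b)) < weight {a, b, a + b} := by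
  have hS : IsFareyTriple {a, b, a + b} :=
    isFareyTriple_triple_iff.2 ⟨h, h.isFareyPair_iff.2 (.inl rfl)⟩
  have := weight_mutate_add_height hS
  rw [mutant, if_pos rfl, height_fd] at this
  have := height_sub_lt_height_add h.delta_eq_one ha hb
  omega

theorem lt_weight_mutate (hS : IsFareyTriple {a, b, c}) (ha : 1 ≤ a.2) (hb : 1 ≤ b.2)
    (hc : c ≠ a + b) : weight {a, b, c} < weight (mutate a b c) := by
  obtain ⟨hab, hac, hbc⟩ := isFareyTriple_triple_iff.1 hS
  have hfd : c = fd a b := (hab.isFareyPair_iff.1 ⟨hac, hbc⟩).resolve_left hc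
  have := weight_mutate_add_height hS
  rw [mutant, if_neg hc] at this
  have : height c < height (a + b) :=
    hfd ▸ height_fd a b ▸ height_sub_lt_height_add hab.delta_eq_one ha hb
  omega

theorem _root_.IsFareyTriple.exists_eq_add {S : Finset (ℤ × ℤ)} (hS : IsFareyTriple S) :
    ∃ a b, S = {a, b, a + b} ∧ IsFareyPair a b := by
  obtain ⟨a, b, c, rfl, hab, hac, hbc⟩ := hS.exists_eq
  rcases hab.isFareyPair_iff.1 ⟨hac, hbc⟩ with rfl | hc
  · exact ⟨a, b, rfl, hab⟩
  rcases fd_eq_sub_or_eq_sub a b with h | h <;> rw [h] at hc <;> subst hc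
  · refine ⟨b, a - b, ?_, hbc⟩
    rw [add_sub_cancel]; ext; simp only [Finset.mem_insert, Finset.mem_singleton]; tauto
  · refine ⟨a, b - a, ?_, hac⟩
    rw [add_sub_cancel]; ext; simp only [Finset.mem_insert, Finset.mem_singleton]; tauto

def spine (n : ℤ) : Finset (ℤ × ℤ) := {(n, 1), (n + 1, 1), (1, 0)}

theorem isFareyTriple_spine (n : ℤ) : IsFareyTriple (spine n) :=
  isFareyTriple_triple_iff.2 ⟨⟨lowest_int n, lowest_int (n + 1), by simp [delta]⟩,
    ⟨lowest_int n, lowest_infty, by simp [delta]⟩,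
    ⟨lowest_int (n + 1), lowest_infty, by simp [delta]⟩⟩

theorem weight_spine (n : ℤ) :
    weight (spine n) = (2 * n - 1).natAbs + (2 * n + 1).natAbs + 8 := by
  rw [spine, weight_triple (by simp) (by simp) (by simp)]
  simp only [height]
  omega

theorem mutate_spine_succ (n : ℤ) : mutate (n + 1, 1) (1, 0) (n, 1) = spine (n + 1) := by
  rw [mutate, mutant, if_neg (by simp; omega)]
  ext
  simp only [spine, Finset.mem_insert, Finset.mem_singleton, Prod.mk_add_mk]
  ring_nf
  tauto

theorem mutate_spine_pred (n : ℤ) : mutate (n, 1) (1, 0) (n + 1, 1) = spine (n - 1) := by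
  rw [mutate, mutant, if_pos (by simp), fd, if_pos (by simp)]
  ext
  simp only [spine, Finset.mem_insert, Finset.mem_singleton, Prod.mk_sub_mk]
  ring_nf
  tauto

theorem _root_.IsFareyTriple.exists_eq_spine {S : Finset (ℤ × ℤ)} (hS : IsFareyTriple S)
    (h : (1, 0) ∈ S) : ∃ n, S = spine n := by
  obtain ⟨p, q, hpq, hS'⟩ := Finset.card_eq_two.1 (by
    rw [Finset.card_erase_of_mem h, hS.1] : (S.erase (1, 0)).card = 2)
  have hmem : ∀ r ∈ S.erase (1, 0), r.2 = 1 := by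
    intro r hr
    obtain ⟨hr, hrS⟩ := Finset.mem_erase.1 hr
    have hd := hS.2.2 _ h r hrS (Ne.symm hr)
    simpa [delta, abs_of_nonneg (hS.2.1 r hrS).2.1] using hd
  have hpS : p ∈ S.erase (1, 0) := hS' ▸ Finset.mem_insert_self p {q}
  have hqS : q ∈ S.erase (1, 0) := hS' ▸ Finset.mem_insert_of_mem (Finset.mem_singleton_self q)
  have hd := hS.2.2 p (Finset.mem_of_mem_erase hpS) q (Finset.mem_of_mem_erase hqS) hpq
  rw [← Finset.insert_erase h, hS']
  obtain ⟨p₁, p₂⟩ := p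
  obtain ⟨q₁, q₂⟩ := q
  obtain rfl : p₂ = 1 := hmem _ hpS
  obtain rfl : q₂ = 1 := hmem _ hqS
  simp only [delta, mul_one, one_mul] at hd
  rcases abs_eq (zero_le_one' ℤ) |>.1 hd with h' | h'
  · refine ⟨q₁, ?_⟩
    ext ⟨x, y⟩
    simp only [spine, Finset.mem_insert, Finset.mem_singleton, Prod.mk.injEq]
    omega
  · refine ⟨p₁, ?_⟩
    ext ⟨x, y⟩
    simp only [spine, Finset.mem_insert, Finset.mem_singleton, Prod.mk.injEq]
    omega

theorem _root_.IsFareyTriple.exists_eq_add_of_infty_notMem {S : Finset (ℤ × ℤ)}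
    (hS : IsFareyTriple S) (h : (1, 0) ∉ S) :
    ∃ a b, S = {a, b, a + b} ∧ IsFareyPair a b ∧ 1 ≤ a.2 ∧ 1 ≤ b.2 := by
  obtain ⟨a, b, rfl, hab⟩ := hS.exists_eq_add
  exact ⟨a, b, rfl, hab, one_le_snd_of_lowest hab.lowest_left (by rintro rfl; simp at h),
    one_le_snd_of_lowest hab.lowest_right (by rintro rfl; simp at h)⟩

theorem notMem_mutate (hS : IsFareyTriple {a, b, c}) : c ∉ mutate a b c := by
  obtain ⟨hab, hac, hbc⟩ := isFareyTriple_triple_iff.1 hS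
  simp only [mutate, Finset.mem_insert, Finset.mem_singleton, not_or]
  exact ⟨hac.ne.symm, hbc.ne.symm, hab.mutant_ne.symm⟩

theorem card_inter_mutate (hS : IsFareyTriple {a, b, c}) :
    ({a, b, c} ∩ mutate a b c).card = 2 := by
  rw [Finset.insert_inter_of_mem (by simp [mutate]), Finset.insert_inter_of_mem (by simp [mutate]),
    Finset.singleton_inter_of_notMem (notMem_mutate hS), insert_empty_eq,
    Finset.card_pair (isFareyTriple_triple_iff.1 hS).1.ne]

abbrev FareyTriple := {S : Finset (ℤ × ℤ) // IsFareyTriple S}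

open SimpleGraph

theorem exchangeGraph_adj {S T : FareyTriple} :
    exchangeGraph.Adj S T ↔ (S.1 ∩ T.1).card = 2 := by
  rw [exchangeGraph, fromRel_adj, Finset.inter_comm T.1, or_self, and_iff_right_iff_imp]
  rintro h rfl
  rw [Finset.inter_self, S.2.1] at h
  exact absurd h (by norm_num)

theorem eq_mutate_of_adj {S T : FareyTriple} (hS : S.1 = {a, b, c})
    (hST : exchangeGraph.Adj S T) (hc : c ∉ T.1) : T.1 = mutate a b c := by
  obtain ⟨hab, hac, hbc⟩ := isFareyTriple_triple_iff.1 (hS ▸ S.2)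
  have hsub : S.1 ∩ T.1 ⊆ {a, b} := by
    intro p hp
    rw [Finset.mem_inter, hS] at hp
    simp only [Finset.mem_insert, Finset.mem_singleton] at hp ⊢
    rcases hp with ⟨rfl | rfl | rfl, hpT⟩
    exacts [.inl rfl, .inr rfl, absurd hpT hc]
  have hinter : S.1 ∩ T.1 = {a, b} := Finset.eq_of_subset_of_card_le hsub
    (by rw [exchangeGraph_adj.1 hST, Finset.card_pair hab.ne])
  have haT : a ∈ T.1 := (Finset.mem_inter.1 (hinter ▸ Finset.mem_insert_self a {b})).2
  have hbT : b ∈ T.1 := (Finset.mem_inter.1 (hinter ▸ Finset.mem_insert_of_mem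
    (Finset.mem_singleton_self b))).2
  obtain ⟨x, hx⟩ := Finset.exists_eq_triple_of_mem T.2.1 haT hbT hab.ne
  obtain ⟨-, hax, hbx⟩ := isFareyTriple_triple_iff.1 (hx ▸ T.2)
  rw [hx, mutate, hab.eq_mutant ⟨hac, hbc⟩ ⟨hax, hbx⟩ (by rintro rfl; simp [hx] at hc)]

theorem adj_iff_mutate {S T : FareyTriple} (hS : S.1 = {a, b, c}) :
    exchangeGraph.Adj S T ↔ T.1 = mutate a b c ∨ T.1 = mutate b c a ∨ T.1 = mutate a c b := by
  have hS₁ : IsFareyTriple {a, b, c} := hS ▸ S.2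
  have hS₂ : IsFareyTriple {b, c, a} := Finset.triple_rotate a b c ▸ hS₁
  have hS₃ : IsFareyTriple {a, c, b} := Finset.triple_swap a b c ▸ hS₁
  constructor
  · intro hST
    by_cases hc : c ∈ T.1
    · by_cases ha : a ∈ T.1
      · by_cases hb : b ∈ T.1
        · have hsub : S.1 ⊆ T.1 := hS ▸ by simp [Finset.insert_subset_iff, ha, hb, hc]
          have := exchangeGraph_adj.1 hST
          rw [Finset.inter_eq_left.2 hsub, S.2.1] at this
          exact absurd this (by norm_num)
        · exact .inr (.inr (eq_mutate_of_adj (hS.trans (Finset.triple_swap a b c)) hST hb))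
      · exact .inr (.inl (eq_mutate_of_adj (hS.trans (Finset.triple_rotate a b c)) hST ha))
    · exact .inl (eq_mutate_of_adj hS hST hc)
  · rw [exchangeGraph_adj, hS]
    rintro (hT | hT | hT) <;> rw [hT]
    · exact card_inter_mutate hS₁
    · rw [Finset.triple_rotate]; exact card_inter_mutate hS₂
    · rw [Finset.triple_swap]; exact card_inter_mutate hS₃

theorem ncard_neighborSet (S : FareyTriple) : (exchangeGraph.neighborSet S).ncard = 3 := by
  obtain ⟨a, b, c, hS, hab, hac, hbc⟩ := S.2.exists_eq
  have hS₁ : IsFareyTriple {a, b, c} := hS ▸ S.2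
  have himage : Subtype.val '' exchangeGraph.neighborSet S =
      {mutate a b c, mutate b c a, mutate a c b} := by
    ext T
    constructor
    · rintro ⟨T, hST, rfl⟩
      exact (adj_iff_mutate hS).1 hST
    · intro hT
      have hT' : IsFareyTriple T := by
        rcases hT with rfl | rfl | rfl
        exacts [isFareyTriple_mutate hab, isFareyTriple_mutate hbc, isFareyTriple_mutate hac]
      exact ⟨⟨T, hT'⟩, (adj_iff_mutate hS).2 hT, rfl⟩
  have hc₁ : c ∉ mutate a b c := notMem_mutate hS₁
  have ha₂ : a ∉ mutate b c a := notMem_mutate (Finset.triple_rotate a b c ▸ hS₁)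
  rw [← Set.ncard_image_of_injective _ Subtype.val_injective, himage, Set.ncard_eq_three]
  refine ⟨_, _, _, ?_, ?_, ?_, rfl⟩ <;> intro h
  · exact hc₁ (h ▸ by simp [mutate])
  · exact hc₁ (h ▸ by simp [mutate])
  · exact ha₂ (h ▸ by simp [mutate])

theorem subsingleton_adj_weight_le (S : FareyTriple) :
    {T | exchangeGraph.Adj S T ∧ weight T.1 ≤ weight S.1}.Subsingleton := by
  suffices ∃ F, ∀ T, exchangeGraph.Adj S T → weight T.1 ≤ weight S.1 → T.1 = F by
    obtain ⟨F, hF⟩ := this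
    exact fun T₁ h₁ T₂ h₂ =>
      Subtype.ext <| (hF T₁ h₁.1 h₁.2).trans (hF T₂ h₂.1 h₂.2).symm
  by_cases hinf : (1, 0) ∈ S.1
  · obtain ⟨n, hn⟩ := S.2.exists_eq_spine hinf
    refine ⟨if 0 < n then spine (n - 1) else spine (n + 1), fun T hST hle => ?_⟩
    rw [hn] at hle
    rcases (adj_iff_mutate hn).1 hST with hT | hT | hT <;> rw [hT] at hle ⊢
    · exact absurd hle (not_le.2 (lt_weight_mutate (isFareyTriple_spine n) (by simp) (by simp)
        (by simp [Prod.ext_iff])))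
    · rw [mutate_spine_succ, weight_spine, weight_spine] at *
      rw [if_neg (by omega)]
    · rw [mutate_spine_pred, weight_spine, weight_spine] at *
      rw [if_pos (by omega)]
  · obtain ⟨a, b, hS, hab, ha, hb⟩ := S.2.exists_eq_add_of_infty_notMem hinf
    have hS₁ : IsFareyTriple {a, b, a + b} := hS ▸ S.2
    refine ⟨mutate a b (a + b), fun T hST hle => ?_⟩
    rcases (adj_iff_mutate hS).1 hST with hT | hT | hT
    · exact hT
    · have := lt_weight_mutate (Finset.triple_rotate a b (a + b) ▸ hS₁) hb (by simp; omega)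
        (ne_add_add_of_lowest hab.lowest_right a)
      rw [← Finset.triple_rotate, ← hS, ← hT] at this
      omega
    · have := lt_weight_mutate (Finset.triple_swap a b (a + b) ▸ hS₁) ha (by simp; omega)
        (by rw [add_comm a b]; exact ne_add_add_of_lowest hab.lowest_left b)
      rw [← Finset.triple_swap, ← hS, ← hT] at this
      omega

def root : FareyTriple := ⟨spine 0, isFareyTriple_spine 0⟩

theorem exists_adj_weight_lt (S : FareyTriple) (hS : S ≠ root) :
    ∃ T, exchangeGraph.Adj S T ∧ weight T.1 < weight S.1 := by
  by_cases hinf : (1, 0) ∈ S.1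
  · obtain ⟨n, hn⟩ := S.2.exists_eq_spine hinf
    have hn₀ : n ≠ 0 := by rintro rfl; exact hS (Subtype.ext hn)
    rcases lt_or_gt_of_ne hn₀ with hn₀ | hn₀
    · refine ⟨⟨spine (n + 1), isFareyTriple_spine _⟩,
        (adj_iff_mutate hn).2 (.inr (.inl (mutate_spine_succ n).symm)), ?_⟩
      rw [hn, weight_spine, weight_spine]
      omega
    · refine ⟨⟨spine (n - 1), isFareyTriple_spine _⟩,
        (adj_iff_mutate hn).2 (.inr (.inr (mutate_spine_pred n).symm)), ?_⟩
      rw [hn, weight_spine, weight_spine]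
      omega
  · obtain ⟨a, b, hS, hab, ha, hb⟩ := S.2.exists_eq_add_of_infty_notMem hinf
    exact ⟨⟨mutate a b (a + b), isFareyTriple_mutate hab⟩, (adj_iff_mutate hS).2 (.inl rfl),
      hS ▸ weight_mutate_lt hab ha hb⟩

end Farey

/-- the exchange graph of Farey triples is a 3-regular tree:
it is connected, has no cycles, and every vertex has exactly 3 neighbors. -/
theorem exchange_graph_is_tree :
    exchangeGraph.IsTree ∧
      ∀ S, (exchangeGraph.neighborSet S).ncard = 3 := by
  refine ⟨⟨?_, ?_⟩, Farey.ncard_neighborSet⟩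
  · exact SimpleGraph.connected_of_exists_adj_lt (fun S => Farey.weight S.1) Farey.root
      Farey.exists_adj_weight_lt
  · exact SimpleGraph.isAcyclic_of_subsingleton_adj_le (fun S => Farey.weight S.1)
      Farey.subsingleton_adj_weight_le
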